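/- Let (a_k), (c_k) be nonnegative sequences with ∑a_k < 1, c_1 ≤ a_1, and c_m ≤ a_m + ∑_{k=1}^{m-1} a_{m-k} c_k for m ≥ 2. Let q ≥ 1 and suppose A_q := ∑_{k≥1} a_k k^q < ∞. Then C_k := ∑_{j≥1} c_j j^k < ∞ for all 1 ≤ k ≤ q, and C_q ≤ (1-A_0)^{-1} (A_q + ∑_{k=1}^{q} binom(q,k) C_{q-k} A_k), where A_0 := ∑_{k≥1} a_k and C_0 := ∑_{k≥1} c_k. -/

import Mathlib

/-!
Multiplying the renewal inequality by `m ^ r` and expanding `m ^ r = ((m - k) + k) ^ r` binomially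
bounds the partial moment `S_r(N) = ∑_{m ≤ N} c_m m ^ r` by
`A_r + ∑_{i ≤ r} binom(r,i) A_i S_{r-i}(N)`.
The `i = 0` term is `A_0 S_r(N)` with `A_0 < 1`, so it can be absorbed into the left side; strong
induction on `r` then bounds every `S_r(N)` uniformly in `N`, which gives summability, and letting
`N → ∞` gives the estimate.
-/

open Finset

/-- The paper's `A_r` and `C_r` are `∑' j, moment a r (j + 1)` and
`∑' j, moment c r (j + 1)`. -/
noncomputable def moment (f : ℕ → ℝ) (r m : ℕ) : ℝ := f m * (m : ℝ) ^ r

section Moment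

variable {f : ℕ → ℝ}

lemma moment_succ (f : ℕ → ℝ) (r j : ℕ) :
    moment f r (j + 1) = f (j + 1) * ((j : ℝ) + 1) ^ r := by
  simp [moment]

@[simp]
lemma moment_zero (f : ℕ → ℝ) : moment f 0 = f := by
  ext m; simp [moment]

lemma moment_nonneg (hf : ∀ m, 0 ≤ f m) (r m : ℕ) : 0 ≤ moment f r m :=
  mul_nonneg (hf m) (by positivity)

lemma moment_succ_le_of_le (hf : ∀ m, 0 ≤ f m) {i r : ℕ} (hir : i ≤ r) (j : ℕ) :
    moment f i (j + 1) ≤ moment f r (j + 1) :=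
  mul_le_mul_of_nonneg_left (pow_le_pow_right₀ (by simp) hir) (hf _)

lemma summable_moment_of_le (hf : ∀ m, 0 ≤ f m) {i r : ℕ} (hir : i ≤ r)
    (hr : Summable fun j => moment f r (j + 1)) : Summable fun j => moment f i (j + 1) :=
  hr.of_nonneg_of_le (fun _ => moment_nonneg hf i _) (moment_succ_le_of_le hf hir)

end Moment

lemma sum_Ioc_eq_sum_range {M : Type*} [AddCommMonoid M] (f : ℕ → M) (k N : ℕ) :
    ∑ m ∈ Ioc k N, f m = ∑ j ∈ range (N - k), f (k + j + 1) := by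
  refine sum_nbij' (fun m => m - k - 1) (fun j => k + j + 1) ?_ ?_ ?_ ?_ ?_ <;>
    intro x hx <;> simp only [mem_Ioc, mem_range] at * <;> first | omega | congr 1; omega

lemma sum_Icc_one_eq_sum_range {M : Type*} [AddCommMonoid M] (f : ℕ → M) (N : ℕ) :
    ∑ m ∈ Icc 1 N, f m = ∑ j ∈ range N, f (j + 1) := by
  simpa [← Icc_add_one_left_eq_Ioc] using sum_Ioc_eq_sum_range f 0 N

lemma sum_Icc_one_le_tsum {f : ℕ → ℝ} (hf : ∀ m, 0 ≤ f m)
    (hs : Summable fun j => f (j + 1)) (N : ℕ) :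
    ∑ m ∈ Icc 1 N, f m ≤ ∑' j, f (j + 1) := by
  rw [sum_Icc_one_eq_sum_range]
  exact hs.sum_le_tsum _ fun _ _ => hf _

lemma sum_Icc_convolution_le {g h : ℕ → ℝ} (hg : ∀ t, 0 ≤ g t) (hh : ∀ k, 0 ≤ h k)
    (hgs : Summable fun t => g (t + 1)) (N : ℕ) :
    ∑ m ∈ Icc 1 N, ∑ k ∈ Icc 1 (m - 1), g (m - k) * h k ≤
      (∑' t, g (t + 1)) * ∑ k ∈ Icc 1 N, h k := by
  have hinner : ∀ k, ∑ m ∈ Ioc k N, g (m - k) ≤ ∑' t, g (t + 1) := fun k => by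
    rw [sum_Ioc_eq_sum_range]
    simpa [add_assoc, add_tsub_cancel_left] using hgs.sum_le_tsum (range (N - k)) fun t _ => hg _
  calc ∑ m ∈ Icc 1 N, ∑ k ∈ Icc 1 (m - 1), g (m - k) * h k
      = ∑ k ∈ Icc 1 N, (∑ m ∈ Ioc k N, g (m - k)) * h k := by
        simp_rw [sum_mul]
        exact sum_comm' fun m k => by simp only [mem_Icc, mem_Ioc]; omega
    _ ≤ ∑ k ∈ Icc 1 N, (∑' t, g (t + 1)) * h k := by gcongr with k; exacts [hh k, hinner k]
    _ = (∑' t, g (t + 1)) * ∑ k ∈ Icc 1 N, h k := (mul_sum ..).symm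

lemma sum_Icc_convolution_mul_pow (a c : ℕ → ℝ) (r m : ℕ) :
    (∑ k ∈ Icc 1 (m - 1), a (m - k) * c k) * (m : ℝ) ^ r =
      ∑ i ∈ range (r + 1), (r.choose i : ℝ) *
        ∑ k ∈ Icc 1 (m - 1), moment a i (m - k) * moment c (r - i) k := by
  simp_rw [mul_sum, sum_mul]
  rw [sum_comm]
  refine sum_congr rfl fun k hk => ?_
  have hkm : k ≤ m := by simp only [mem_Icc] at hk; omega
  have hm : (m : ℝ) = ((m - k : ℕ) : ℝ) + k := by rw [Nat.cast_sub hkm]; ring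
  rw [hm, add_pow, mul_sum]
  refine sum_congr rfl fun i _ => ?_
  simp only [moment]
  ring

/-- At `m = 1` the sum is empty, so this includes `c 1 ≤ a 1`. -/
def IsRenewalSubsolution (a c : ℕ → ℝ) : Prop :=
  ∀ m, 1 ≤ m → c m ≤ a m + ∑ k ∈ Icc 1 (m - 1), a (m - k) * c k

namespace IsRenewalSubsolution

variable {a c : ℕ → ℝ}

lemma sum_moment_le (hsub : IsRenewalSubsolution a c) (ha : ∀ k, 0 ≤ a k)
    (hc : ∀ k, 0 ≤ c k) {r : ℕ} (hA : ∀ i ≤ r, Summable fun j => moment a i (j + 1))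
    (N : ℕ) :
    ∑ m ∈ Icc 1 N, moment c r m ≤ ∑' j, moment a r (j + 1) +
      ∑ i ∈ range (r + 1), (r.choose i : ℝ) * (∑ m ∈ Icc 1 N, moment c (r - i) m) *
        ∑' j, moment a i (j + 1) := by
  calc ∑ m ∈ Icc 1 N, moment c r m
      ≤ ∑ m ∈ Icc 1 N,
          (moment a r m + (∑ k ∈ Icc 1 (m - 1), a (m - k) * c k) * (m : ℝ) ^ r) := by
        gcongr with m hm
        rw [moment, moment, ← add_mul]
        exact mul_le_mul_of_nonneg_right (hsub m (mem_Icc.mp hm).1) (by positivity)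
    _ = ∑ m ∈ Icc 1 N, moment a r m + ∑ i ∈ range (r + 1), (r.choose i : ℝ) *
          ∑ m ∈ Icc 1 N, ∑ k ∈ Icc 1 (m - 1), moment a i (m - k) * moment c (r - i) k := by
        simp_rw [sum_add_distrib, sum_Icc_convolution_mul_pow, mul_sum]
        rw [sum_comm (s := Icc 1 N)]
    _ ≤ ∑' j, moment a r (j + 1) + ∑ i ∈ range (r + 1), (r.choose i : ℝ) *
          ((∑' j, moment a i (j + 1)) * ∑ m ∈ Icc 1 N, moment c (r - i) m) := by
        gcongr with i hi
        · exact sum_Icc_one_le_tsum (moment_nonneg ha r) (hA r le_rfl) N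
        · exact sum_Icc_convolution_le (moment_nonneg ha i) (moment_nonneg hc _)
            (hA i (Nat.lt_succ_iff.mp (mem_range.mp hi))) N
    _ = _ := by
        congr 1
        exact sum_congr rfl fun i _ => by ring

lemma sum_moment_le_inv_mul (hsub : IsRenewalSubsolution a c) (ha : ∀ k, 0 ≤ a k)
    (hc : ∀ k, 0 ≤ c k) (hlt : ∑' j, a (j + 1) < 1) {r : ℕ}
    (hA : ∀ i ≤ r, Summable fun j => moment a i (j + 1)) (N : ℕ) :
    ∑ m ∈ Icc 1 N, moment c r m ≤ (1 - ∑' j, a (j + 1))⁻¹ *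
      (∑' j, moment a r (j + 1) + ∑ i ∈ Icc 1 r,
        (r.choose i : ℝ) * (∑ m ∈ Icc 1 N, moment c (r - i) m) *
          ∑' j, moment a i (j + 1)) := by
  have key := hsub.sum_moment_le ha hc hA N
  rw [sum_range_succ', ← sum_Icc_one_eq_sum_range (fun i => (r.choose i : ℝ) *
    (∑ m ∈ Icc 1 N, moment c (r - i) m) * ∑' j, moment a i (j + 1))] at key
  simp only [Nat.choose_zero_right, Nat.cast_one, one_mul, Nat.sub_zero, moment_zero] at key
  rw [le_inv_mul_iff₀ (by linarith)]
  linarith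

lemma exists_sum_moment_le (hsub : IsRenewalSubsolution a c) (ha : ∀ k, 0 ≤ a k)
    (hc : ∀ k, 0 ≤ c k) (hlt : ∑' j, a (j + 1) < 1) {r : ℕ}
    (hA : ∀ i ≤ r, Summable fun j => moment a i (j + 1)) :
    ∃ M, ∀ N, ∑ m ∈ Icc 1 N, moment c r m ≤ M := by
  induction r using Nat.strong_induction_on with
  | _ r ih =>
    have hM : ∀ i ∈ Icc 1 r, ∃ M, ∀ N, ∑ m ∈ Icc 1 N, moment c (r - i) m ≤ M :=
      fun i hi => ih (r - i) (by simp only [mem_Icc] at hi; omega) fun j hj => hA j (by omega)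
    choose! M hM using hM
    refine ⟨(1 - ∑' j, a (j + 1))⁻¹ * (∑' j, moment a r (j + 1) +
      ∑ i ∈ Icc 1 r, (r.choose i : ℝ) * M i * ∑' j, moment a i (j + 1)), fun N => ?_⟩
    refine (hsub.sum_moment_le_inv_mul ha hc hlt hA N).trans ?_
    gcongr with i hi
    exacts [tsum_nonneg fun _ => moment_nonneg ha i _, hM i hi N]

lemma summable_moment (hsub : IsRenewalSubsolution a c) (ha : ∀ k, 0 ≤ a k)
    (hc : ∀ k, 0 ≤ c k) (hlt : ∑' j, a (j + 1) < 1) {r : ℕ}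
    (hA : ∀ i ≤ r, Summable fun j => moment a i (j + 1)) :
    Summable fun j => moment c r (j + 1) := by
  obtain ⟨M, hM⟩ := hsub.exists_sum_moment_le ha hc hlt hA
  exact summable_of_sum_range_le (fun _ => moment_nonneg hc r _) fun N =>
    sum_Icc_one_eq_sum_range (moment c r) N ▸ hM N

lemma tsum_moment_le (hsub : IsRenewalSubsolution a c) (ha : ∀ k, 0 ≤ a k)
    (hc : ∀ k, 0 ≤ c k) (hlt : ∑' j, a (j + 1) < 1) {r : ℕ}
    (hA : ∀ i ≤ r, Summable fun j => moment a i (j + 1)) :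
    ∑' j, moment c r (j + 1) ≤ (1 - ∑' j, a (j + 1))⁻¹ *
      (∑' j, moment a r (j + 1) + ∑ i ∈ Icc 1 r,
        (r.choose i : ℝ) * (∑' j, moment c (r - i) (j + 1)) * ∑' j, moment a i (j + 1)) := by
  refine Real.tsum_le_of_sum_range_le (fun _ => moment_nonneg hc r _) fun N => ?_
  rw [← sum_Icc_one_eq_sum_range (moment c r)]
  refine (hsub.sum_moment_le_inv_mul ha hc hlt hA N).trans ?_
  gcongr with i hi
  · exact tsum_nonneg fun _ => moment_nonneg ha i _
  · exact sum_Icc_one_le_tsum (moment_nonneg hc _)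
      (hsub.summable_moment ha hc hlt fun j hj => hA j (by omega)) N

end IsRenewalSubsolution

theorem renewal_polynomial_bound_general (a c : ℕ → ℝ) (q : ℕ)
    (ha : ∀ k, 0 ≤ a k) (hcpos : ∀ k, 0 ≤ c k)
    (hlt1 : (∑' k : ℕ, a (k + 1)) < 1)
    (hc1 : c 1 ≤ a 1)
    (hrec : ∀ m : ℕ, 2 ≤ m →
      c m ≤ a m + ∑ k ∈ Finset.Icc 1 (m - 1), a (m - k) * c k)
    (hAq : Summable (fun k : ℕ => a (k + 1) * ((k : ℝ) + 1) ^ q)) :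
    (∀ k : ℕ, 1 ≤ k → k ≤ q →
      Summable (fun j : ℕ => c (j + 1) * ((j : ℝ) + 1) ^ k)) ∧
    (∑' j : ℕ, c (j + 1) * ((j : ℝ) + 1) ^ q) ≤
      (1 - ∑' k : ℕ, a (k + 1))⁻¹ *
        ((∑' k : ℕ, a (k + 1) * ((k : ℝ) + 1) ^ q) +
          ∑ k ∈ Finset.Icc 1 q, (q.choose k : ℝ) *
            (∑' j : ℕ, c (j + 1) * ((j : ℝ) + 1) ^ (q - k)) *
            (∑' j : ℕ, a (j + 1) * ((j : ℝ) + 1) ^ k)) := by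
  have hsub : IsRenewalSubsolution a c := by
    intro m hm
    obtain rfl | hm := hm.eq_or_lt
    · simpa using hc1
    · exact hrec m hm
  have hA : ∀ i ≤ q, Summable fun j => moment a i (j + 1) := fun i hi =>
    summable_moment_of_le ha hi (by simpa only [moment_succ] using hAq)
  simp only [← moment_succ]
  exact ⟨fun k _ hk => hsub.summable_moment ha hcpos hlt1 fun i hi => hA i (hi.trans hk),
    hsub.tsum_moment_le ha hcpos hlt1 hA⟩

/-- Renewal-type inequality, polynomial moments: if `∑ a_k < 1`, `c_1 ≤ a_1`,
`c_m ≤ a_m + ∑_{k=1}^{m-1} a_{m-k} c_k`, and `A_q = ∑ a_k k^q < ∞` for an integer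
`q ≥ 1`, then `C_k = ∑ c_j j^k < ∞` for `1 ≤ k ≤ q` and
`C_q ≤ (1-A_0)⁻¹ (A_q + ∑_{k=1}^q binom(q,k) C_{q-k} A_k)`. -/
theorem renewal_polynomial_bound (a c : ℕ → ℝ) (q : ℕ) (hq : 1 ≤ q)
    (ha : ∀ k, 0 ≤ a k) (hcpos : ∀ k, 0 ≤ c k)
    (hsum : Summable (fun k : ℕ => a (k + 1)))
    (hlt1 : (∑' k : ℕ, a (k + 1)) < 1)
    (hc1 : c 1 ≤ a 1)
    (hrec : ∀ m : ℕ, 2 ≤ m →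
      c m ≤ a m + ∑ k ∈ Finset.Icc 1 (m - 1), a (m - k) * c k)
    (hAq : Summable (fun k : ℕ => a (k + 1) * ((k : ℝ) + 1) ^ q)) :
    (∀ k : ℕ, 1 ≤ k → k ≤ q →
      Summable (fun j : ℕ => c (j + 1) * ((j : ℝ) + 1) ^ k)) ∧
    (∑' j : ℕ, c (j + 1) * ((j : ℝ) + 1) ^ q) ≤
      (1 - ∑' k : ℕ, a (k + 1))⁻¹ *
        ((∑' k : ℕ, a (k + 1) * ((k : ℝ) + 1) ^ q) +
          ∑ k ∈ Finset.Icc 1 q, (q.choose k : ℝ) *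
            (∑' j : ℕ, c (j + 1) * ((j : ℝ) + 1) ^ (q - k)) *
            (∑' j : ℕ, a (j + 1) * ((j : ℝ) + 1) ^ k)) :=
  renewal_polynomial_bound_general a c q ha hcpos hlt1 hc1 hrec hAq
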